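/- arXiv:2509.09939 — 3 statements merged into one kernel-verified Lean document; each statement's English description precedes it below -/
import Mathlib

section
/- Let p ∈ {1,…,6}, let σ = {p, p+1} with entries reduced mod 6 to representatives in {1,…,6}, and let t be the unique element of {1,2,3} that is congruent mod 3 to neither p nor p+1. Then the standard face subgroup A^tG^σ = ⟨⋃_{i∈α_σ}( Ȳ_i ∪ ⋃_{j∈α_σ^c} Z̄^{j*}_{i,j} )⟩ of Ker(Φ) is isomorphic, as a group, to (∏_{j∈α_t} A_j) × ∏_{i∈α_σ} G_i. -/
namespace SB

/-- `cc n p` is the 0-based boundary of the `p`-th label sequence: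
`cc n p = ⌈p·n/3⌉` for `p ≤ 3`, and `cc n p = n + ⌈(p-3)·n/3⌉` for `p ≥ 3`. -/
def cc (n p : ℕ) : ℕ := if p < 3 then (p * n + 2) / 3 else n + ((p - 3) * n + 2) / 3

/-- The 0-based label sequence `α_{p+1}` (paper's `α_1,…,α_6` for `p = 0,…,5`)
as a finite set of coordinates in `Fin (2n)`. -/
def alphaF (n p : ℕ) : Finset (Fin (2 * n)) :=
  Finset.univ.filter (fun x => cc n p ≤ x.val ∧ x.val < cc n (p + 1))

/-- The 0-based label sequence `α_{t+1}` (for `t < 3`) as a finite set of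
indices in `Fin n` (indexing the factors `A_j`). -/
def alphaN (n t : ℕ) : Finset (Fin n) :=
  Finset.univ.filter (fun x => cc n t ≤ x.val ∧ x.val < cc n (t + 1))

/-- Reduction of a natural number modulo `2n`, as an element of `Fin (2n)`. -/
def idx {n : ℕ} (hn : 0 < n) (k : ℕ) : Fin (2 * n) := ⟨k % (2 * n), Nat.mod_lt _ (by omega)⟩

/-- Reduction of a natural number modulo `n`, as an element of `Fin n`
(this implements the paper's `j*`). -/
def idxN {n : ℕ} (hn : 0 < n) (k : ℕ) : Fin n := ⟨k % n, Nat.mod_lt _ hn⟩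

/-- The set `Ȳ_i` of vectorized kernel generators: `y ∈ Y i` placed in
coordinate `i` with identity elsewhere. -/
def Ybar {n : ℕ} {G : Fin (2 * n) → Type} [∀ i, Group (G i)]
    (Y : ∀ i, Set (G i)) (i : Fin (2 * n)) : Set (∀ i', G i') :=
  Pi.mulSingle i '' (Y i)

/-- The set `Z̄^j_{i,k}` of vectorized section generators: for `b ∈ A j`, the
element with `s j i b` in coordinate `i`, `s j k b⁻¹` in coordinate `k`, and
identity elsewhere. -/
def Zbar {n : ℕ} {A : Fin n → Type} [∀ j, CommGroup (A j)]
    {G : Fin (2 * n) → Type} [∀ i, Group (G i)]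
    (s : ∀ (j : Fin n) (i : Fin (2 * n)), A j →* G i)
    (j : Fin n) (i k : Fin (2 * n)) : Set (∀ i', G i') :=
  Set.range (fun b : A j => Pi.mulSingle i (s j i b) * Pi.mulSingle k (s j k b⁻¹))

/-!
Each `G i` has a retraction `ρ i : G i →* ∀ j, A j` that kills `Y i` and restricts to the inclusion
of `A j` along `s j i`: the map `b ↦ ∏ j, φ i (s j i (b j))` is a surjective endomorphism of the
finitely generated abelian group `∀ j, A j` (surjective because `Y i ⊆ ker (φ i)` and the sections
generate `G i`), hence an automorphism, and `ρ i` is its inverse composed with `φ i`.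

The isomorphism sends `h` to the `A j`-components of `ρ (j + n) (h (j + n))` for `j ∈ α_t`, together
with the restriction of `h` to `α_σ`. It is injective because `∏ i, ρ i (h i)` is trivial on the
generators and hence on the whole face subgroup, while outside `α_σ` each entry of `h` lies in the
image of the section of its class, and each class `j` consists of the two coordinates `j, j + n`.
It is surjective because every class has a coordinate outside `α_σ`, so each `s j i b` with
`i ∈ α_σ` has a `Z̄` partner, and for `j ∈ α_t` the product `z̄_{i₀,j}(b) z̄_{i₀,j+n}(b⁻¹)` is
trivial on `α_σ`.
-/

open Function

def lowerCoord {n : ℕ} (j : Fin n) : Fin (2 * n) := ⟨j, by omega⟩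

def upperCoord {n : ℕ} (j : Fin n) : Fin (2 * n) := ⟨j + n, by omega⟩

lemma lowerCoord_ne_upperCoord {n : ℕ} (j j' : Fin n) : lowerCoord j ≠ upperCoord j' := by
  simp only [lowerCoord, upperCoord, ne_eq, Fin.ext_iff]
  omega

lemma upperCoord_injective {n : ℕ} : Injective (upperCoord (n := n)) := by
  intro j j' h
  simp only [upperCoord, Fin.ext_iff] at h
  exact Fin.ext (by omega)

lemma idxN_eq_iff {n : ℕ} (hn : 0 < n) (k : Fin (2 * n)) (j : Fin n) :
    idxN hn k.val = j ↔ k = lowerCoord j ∨ k = upperCoord j := by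
  have hk := k.isLt
  have hj := j.isLt
  simp only [idxN, lowerCoord, upperCoord, Fin.ext_iff]
  rcases lt_or_ge k.val n with hkn | hkn
  · rw [Nat.mod_eq_of_lt hkn]
    omega
  · rw [Nat.mod_eq_sub_mod hkn, Nat.mod_eq_of_lt (by omega)]
    omega

lemma idxN_lowerCoord {n : ℕ} (hn : 0 < n) (j : Fin n) : idxN hn (lowerCoord j).val = j :=
  (idxN_eq_iff hn _ _).2 (Or.inl rfl)

lemma idxN_upperCoord {n : ℕ} (hn : 0 < n) (j : Fin n) : idxN hn (upperCoord j).val = j :=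
  (idxN_eq_iff hn _ _).2 (Or.inr rfl)

lemma filter_idxN_eq {n : ℕ} (hn : 0 < n) (j : Fin n) :
    ({k | idxN hn k.val = j} : Finset (Fin (2 * n))) = {lowerCoord j, upperCoord j} := by
  ext k
  simp [idxN_eq_iff]

def faceCoords (n p : ℕ) : Finset (Fin (2 * n)) := alphaF n p ∪ alphaF n ((p + 1) % 6)

lemma faceCoords_nonempty {n p : ℕ} (hn : 3 ≤ n) (hp : p < 6) : (faceCoords n p).Nonempty := by
  have hcc : cc n p < cc n (p + 1) ∧ cc n p < 2 * n := by
    interval_cases p <;> simp [cc] <;> omega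
  refine ⟨⟨cc n p, hcc.2⟩, ?_⟩
  simp only [faceCoords, alphaF, Finset.mem_union, Finset.mem_filter, Finset.mem_univ, true_and]
  exact Or.inl ⟨le_rfl, hcc.1⟩

lemma lowerCoord_notMem_or_upperCoord_notMem {n p : ℕ} (hn : 3 ≤ n) (hp : p < 6) (j : Fin n) :
    lowerCoord j ∉ faceCoords n p ∨ upperCoord j ∉ faceCoords n p := by
  have := j.isLt
  simp only [faceCoords, alphaF, lowerCoord, upperCoord, Finset.mem_union, Finset.mem_filter,
    Finset.mem_univ, true_and]
  interval_cases p <;> simp [cc] <;> omega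

lemma mem_alphaN_iff {n p t : ℕ} (hn : 3 ≤ n) (hp : p < 6) (ht : t < 3) (ht1 : t ≠ p % 3)
    (ht2 : t ≠ (p + 1) % 3) (j : Fin n) :
    j ∈ alphaN n t ↔ lowerCoord j ∉ faceCoords n p ∧ upperCoord j ∉ faceCoords n p := by
  have := j.isLt
  simp only [faceCoords, alphaF, alphaN, lowerCoord, upperCoord, Finset.mem_union,
    Finset.mem_filter, Finset.mem_univ, true_and]
  interval_cases p <;> interval_cases t <;> simp_all [cc] <;> omega

lemma MonoidHom.finsetProd_comp_evalMonoidHom_mulSingle {ι N : Type*} {M : ι → Type*}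
    [Fintype ι] [DecidableEq ι] [∀ i, Monoid (M i)] [CommMonoid N] (f : ∀ i, M i →* N) (k : ι)
    (x : M k) : (∏ i, (f i).comp (Pi.evalMonoidHom M i)) (Pi.mulSingle k x) = f k x := by
  rw [MonoidHom.finsetProd_apply, Fintype.prod_eq_single k fun i hi => by simp [hi]]
  simp

lemma exists_retraction {κ Γ : Type*} [Fintype κ] [DecidableEq κ] {A : κ → Type*}
    [∀ j, CommGroup (A j)] [∀ j, Module.Finite ℤ (Additive (A j))] [Group Γ]
    {φ : Γ →* ∀ j, A j} (hφ : Surjective φ) (s : ∀ j, A j →* Γ) {Y : Set Γ}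
    (hY : ∀ y ∈ Y, φ y = 1) (hgen : Subgroup.closure (Y ∪ ⋃ j, Set.range (s j)) = ⊤) :
    ∃ ρ : Γ →* ∀ j, A j, (∀ j a, ρ (s j a) = Pi.mulSingle j a) ∧ ∀ y ∈ Y, ρ y = 1 := by
  let U : (∀ j, A j) →* ∀ j, A j := ∏ j, (φ.comp (s j)).comp (Pi.evalMonoidHom A j)
  have hU : ∀ j a, U (Pi.mulSingle j a) = φ (s j a) :=
    MonoidHom.finsetProd_comp_evalMonoidHom_mulSingle _
  have hsurj : Surjective U := by
    rw [← MonoidHom.range_eq_top, eq_top_iff, ← Subgroup.map_top_of_surjective φ hφ, ← hgen,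
      MonoidHom.map_closure, Subgroup.closure_le]
    rintro _ ⟨g, hg | hg, rfl⟩
    · exact ⟨1, by rw [map_one, hY g hg]⟩
    · obtain ⟨j, a, rfl⟩ := Set.mem_iUnion.1 hg
      exact ⟨Pi.mulSingle j a, hU j a⟩
  -- a surjective endomorphism of a finitely generated `ℤ`-module is injective
  have hinj : Injective U :=
    OrzechProperty.injective_of_surjective_endomorphism
      ({ toFun := U, map_zero' := U.map_one, map_add' := U.map_mul } :
        (∀ j, Additive (A j)) →+ ∀ j, Additive (A j)).toIntLinearMap hsurj
  let e := MulEquiv.ofBijective U ⟨hinj, hsurj⟩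
  refine ⟨e.symm.toMonoidHom.comp φ, fun j a => ?_, fun y hy => ?_⟩
  · exact (congrArg e.symm (hU j a).symm).trans (e.symm_apply_apply _)
  · simp [hY y hy]

lemma MonoidHom.bijective_prod_comp_subtype {P X Z : Type*} [Group P] [Group X] [Group Z]
    {H : Subgroup P} (f : P →* X) (g : P →* Z) (hg : H.map g = ⊤) (hf : (H ⊓ g.ker).map f = ⊤)
    (hinj : ∀ h ∈ H, f h = 1 → g h = 1 → h = 1) : Bijective ((f.prod g).comp H.subtype) := by
  refine ⟨(injective_iff_map_eq_one _).2 fun h hfg => Subtype.ext ?_, fun ⟨x, z⟩ => ?_⟩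
  · exact hinj h h.2 (congrArg Prod.fst hfg) (congrArg Prod.snd hfg)
  · obtain ⟨h₀, hh₀, rfl⟩ := (Subgroup.mem_map.1 (hg ▸ Subgroup.mem_top z))
    obtain ⟨h₁, ⟨hh₁, hgh₁⟩, hfh₁⟩ :=
      Subgroup.mem_map.1 (hf ▸ Subgroup.mem_top (x * (f h₀)⁻¹))
    refine ⟨⟨h₁ * h₀, mul_mem hh₁ hh₀⟩, Prod.ext ?_ ?_⟩
    · simp [hfh₁]
    · simp [MonoidHom.mem_ker.1 hgh₁]

section FaceSubgroup

variable {n : ℕ} {A : Fin n → Type} [∀ j, CommGroup (A j)] {G : Fin (2 * n) → Type}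
  [∀ i, Group (G i)]

def faceSubgroup (Y : ∀ i, Set (G i)) (s : ∀ (j : Fin n) (i : Fin (2 * n)), A j →* G i)
    (c : Fin (2 * n) → Fin n) (σ : Finset (Fin (2 * n))) : Subgroup (∀ i, G i) :=
  Subgroup.closure (⋃ i ∈ σ, (Ybar Y i ∪ ⋃ k ∈ σᶜ, Zbar s (c k) i k))

def restrictHom (G : Fin (2 * n) → Type) [∀ i, Group (G i)] (σ : Finset (Fin (2 * n))) :
    (∀ i, G i) →* ∀ i : σ, G i :=
  MonoidHom.pi fun i => Pi.evalMonoidHom G i.1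

variable {Y : ∀ i, Set (G i)} {s : ∀ (j : Fin n) (i : Fin (2 * n)), A j →* G i}
  {c : Fin (2 * n) → Fin n} {σ : Finset (Fin (2 * n))}

@[simp]
lemma restrictHom_apply (g : ∀ i, G i) (i : σ) : restrictHom G σ g i = g i := rfl

lemma restrictHom_mulSingle (i : σ) (x : G i) :
    restrictHom G σ (Pi.mulSingle i.1 x) = Pi.mulSingle i x := by
  funext i'
  by_cases h : i' = i
  · subst h; simp
  · simp [Pi.mulSingle_eq_of_ne h, Pi.mulSingle_eq_of_ne (Subtype.coe_injective.ne h)]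

lemma restrictHom_mulSingle_of_notMem {k : Fin (2 * n)} (hk : k ∉ σ) (x : G k) :
    restrictHom G σ (Pi.mulSingle k x) = 1 := by
  funext i
  exact Pi.mulSingle_eq_of_ne (ne_of_mem_of_not_mem i.2 hk) x

lemma mulSingle_mem_faceSubgroup {i : Fin (2 * n)} (hi : i ∈ σ) {y : G i} (hy : y ∈ Y i) :
    Pi.mulSingle i y ∈ faceSubgroup Y s c σ :=
  Subgroup.subset_closure (Set.mem_biUnion hi (Or.inl ⟨y, hy, rfl⟩))

lemma mulSingle_mul_mulSingle_mem_faceSubgroup {i k : Fin (2 * n)} {j : Fin n} (hi : i ∈ σ)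
    (hk : k ∉ σ) (hkj : c k = j) (b : A j) :
    Pi.mulSingle i (s j i b) * Pi.mulSingle k (s j k b⁻¹) ∈ faceSubgroup Y s c σ := by
  subst hkj
  exact Subgroup.subset_closure
    (Set.mem_biUnion hi (Or.inr (Set.mem_biUnion (Finset.mem_compl.2 hk) ⟨b, rfl⟩)))

lemma faceSubgroup_le {K : Subgroup (∀ i, G i)}
    (hY : ∀ i ∈ σ, ∀ y ∈ Y i, Pi.mulSingle i y ∈ K)
    (hZ : ∀ i ∈ σ, ∀ k ∉ σ, ∀ b : A (c k),
      Pi.mulSingle i (s (c k) i b) * Pi.mulSingle k (s (c k) k b⁻¹) ∈ K) :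
    faceSubgroup Y s c σ ≤ K := by
  rw [faceSubgroup, Subgroup.closure_le]
  simp only [Set.iUnion_subset_iff, Set.union_subset_iff, Ybar, Zbar, Set.image_subset_iff,
    Set.range_subset_iff]
  exact fun i hi => ⟨hY i hi, fun k hk => hZ i hi k (Finset.mem_compl.1 hk)⟩

lemma apply_mem_range_of_mem_faceSubgroup {h : ∀ i, G i} (hh : h ∈ faceSubgroup Y s c σ)
    {k : Fin (2 * n)} (hk : k ∉ σ) : h k ∈ (s (c k) k).range := by
  refine faceSubgroup_le (K := (s (c k) k).range.comap (Pi.evalMonoidHom G k)) ?_ ?_ hh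
  · intro i hi y _
    simp [Pi.mulSingle_eq_of_ne (ne_of_mem_of_not_mem hi hk).symm]
  · intro i hi k' _ b
    have hik : k ≠ i := (ne_of_mem_of_not_mem hi hk).symm
    by_cases hk' : k = k'
    · subst hk'
      simp [Pi.mulSingle_eq_of_ne hik]
    · simp [Pi.mulSingle_eq_of_ne hik, Pi.mulSingle_eq_of_ne hk']

lemma map_restrictHom_faceSubgroup
    (hgen : ∀ i, Subgroup.closure (Y i ∪ ⋃ j, Set.range (s j i)) = ⊤)
    (hout : ∀ j, ∃ k ∉ σ, c k = j) : (faceSubgroup Y s c σ).map (restrictHom G σ) = ⊤ := by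
  refine eq_top_iff.2 fun g _ => Subgroup.pi_mem_of_mulSingle_mem g fun i => ?_
  suffices ⊤ ≤ ((faceSubgroup Y s c σ).map (restrictHom G σ)).comap (MonoidHom.mulSingle _ i) from
    this trivial
  rw [← hgen i, Subgroup.closure_le]
  rintro x (hx | hx)
  · exact ⟨_, mulSingle_mem_faceSubgroup i.2 hx, restrictHom_mulSingle i x⟩
  · obtain ⟨j, b, rfl⟩ := Set.mem_iUnion.1 hx
    obtain ⟨k, hk, hkj⟩ := hout j
    refine ⟨_, mulSingle_mul_mulSingle_mem_faceSubgroup i.2 hk hkj b, ?_⟩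
    rw [map_mul, restrictHom_mulSingle, restrictHom_mulSingle_of_notMem hk, mul_one]
    rfl

variable {ρ : ∀ i, G i →* ∀ j, A j}

lemma faceSubgroup_le_ker_prod (hρs : ∀ j i a, ρ i (s j i a) = Pi.mulSingle j a)
    (hρY : ∀ i, ∀ y ∈ Y i, ρ i y = 1) :
    faceSubgroup Y s c σ ≤ (∏ i, (ρ i).comp (Pi.evalMonoidHom G i)).ker := by
  refine faceSubgroup_le (fun i _ y hy => ?_) (fun i _ k _ b => ?_)
  · rw [MonoidHom.mem_ker, MonoidHom.finsetProd_comp_evalMonoidHom_mulSingle, hρY i y hy]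
  · rw [MonoidHom.mem_ker, map_mul, MonoidHom.finsetProd_comp_evalMonoidHom_mulSingle,
      MonoidHom.finsetProd_comp_evalMonoidHom_mulSingle, hρs, hρs, ← Pi.mulSingle_mul,
      mul_inv_cancel, Pi.mulSingle_one]

lemma s_apply_eq_of_mem_faceSubgroup (hρs : ∀ j i a, ρ i (s j i a) = Pi.mulSingle j a)
    {h : ∀ i, G i} (hh : h ∈ faceSubgroup Y s c σ) (hσ : ∀ i ∈ σ, h i = 1) {k : Fin (2 * n)}
    {j : Fin n} (hkj : c k = j) : s j k (ρ k (h k) j) = h k := by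
  subst hkj
  by_cases hk : k ∈ σ
  · simp [hσ k hk]
  · obtain ⟨a, ha⟩ := apply_mem_range_of_mem_faceSubgroup hh hk
    simp [← ha, hρs]

lemma prod_filter_apply_eq_one_of_mem_faceSubgroup
    (hρs : ∀ j i a, ρ i (s j i a) = Pi.mulSingle j a) (hρY : ∀ i, ∀ y ∈ Y i, ρ i y = 1)
    {h : ∀ i, G i} (hh : h ∈ faceSubgroup Y s c σ) (hσ : ∀ i ∈ σ, h i = 1) (j : Fin n) :
    ∏ k with c k = j, ρ k (h k) j = 1 := by
  have hprod := congrFun (faceSubgroup_le_ker_prod hρs hρY hh) j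
  rw [MonoidHom.finsetProd_apply, Finset.prod_apply] at hprod
  rw [Finset.prod_filter_of_ne fun k _ hk => ?_]
  · exact hprod
  · by_contra hkj
    rw [← s_apply_eq_of_mem_faceSubgroup hρs hh hσ rfl, hρs, Pi.mulSingle_eq_of_ne' hkj] at hk
    exact hk rfl

end FaceSubgroup

section Pairs

variable {n : ℕ} {A : Fin n → Type} [∀ j, CommGroup (A j)] {G : Fin (2 * n) → Type}
  [∀ i, Group (G i)] {Y : ∀ i, Set (G i)} {s : ∀ (j : Fin n) (i : Fin (2 * n)), A j →* G i}
  {σ : Finset (Fin (2 * n))} {T : Finset (Fin n)} {ρ : ∀ i, G i →* ∀ j, A j}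

def upperReading (ρ : ∀ i, G i →* ∀ j, A j) (T : Finset (Fin n)) : (∀ i, G i) →* ∀ j : T, A j :=
  MonoidHom.pi fun j =>
    (Pi.evalMonoidHom A j.1).comp ((ρ (upperCoord j.1)).comp (Pi.evalMonoidHom G (upperCoord j.1)))

@[simp]
lemma upperReading_apply (g : ∀ i, G i) (j : T) :
    upperReading ρ T g j = ρ (upperCoord j.1) (g (upperCoord j.1)) j := rfl

lemma eq_one_of_mem_faceSubgroup (hn : 0 < n) (hρs : ∀ j i a, ρ i (s j i a) = Pi.mulSingle j a)
    (hρY : ∀ i, ∀ y ∈ Y i, ρ i y = 1)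
    (hT : ∀ j ∉ T, lowerCoord j ∈ σ ∨ upperCoord j ∈ σ) {h : ∀ i, G i}
    (hh : h ∈ faceSubgroup Y s (fun k => idxN hn k.val) σ) (hθ : restrictHom G σ h = 1)
    (hΨ : upperReading ρ T h = 1) : h = 1 := by
  have hσ : ∀ i ∈ σ, h i = 1 := fun i hi => congrFun hθ ⟨i, hi⟩
  have hσρ : ∀ i ∈ σ, ∀ j, ρ i (h i) j = 1 := fun i hi j => by rw [hσ i hi, map_one]; rfl
  have hpair : ∀ j, ρ (lowerCoord j) (h (lowerCoord j)) j *
      ρ (upperCoord j) (h (upperCoord j)) j = 1 := fun j => by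
    have hfib : ∏ k with idxN hn k.val = j, ρ k (h k) j = 1 :=
      prod_filter_apply_eq_one_of_mem_faceSubgroup hρs hρY hh hσ j
    rwa [filter_idxN_eq, Finset.prod_pair (lowerCoord_ne_upperCoord j j)] at hfib
  have hread : ∀ j, ρ (lowerCoord j) (h (lowerCoord j)) j = 1 ∧
      ρ (upperCoord j) (h (upperCoord j)) j = 1 := fun j => by
    by_cases hj : j ∈ T
    · have hup : ρ (upperCoord j) (h (upperCoord j)) j = 1 := congrFun hΨ ⟨j, hj⟩
      exact ⟨by simpa [hup] using hpair j, hup⟩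
    · rcases hT j hj with hlo | hup
      · exact ⟨hσρ _ hlo j, by simpa [hσρ _ hlo j] using hpair j⟩
      · exact ⟨by simpa [hσρ _ hup j] using hpair j, hσρ _ hup j⟩
  funext k
  obtain ⟨j, hkj⟩ : ∃ j, idxN hn k.val = j := ⟨_, rfl⟩
  rw [← s_apply_eq_of_mem_faceSubgroup hρs hh hσ hkj]
  rcases (idxN_eq_iff hn k j).1 hkj with rfl | rfl
  · rw [(hread j).1, map_one]; rfl
  · rw [(hread j).2, map_one]; rfl

lemma mulSingle_mul_mulSingle_mem_faceSubgroup_of_pair (hn : 0 < n) {i₀ : Fin (2 * n)}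
    (hi₀ : i₀ ∈ σ) {j : Fin n} (hlo : lowerCoord j ∉ σ) (hup : upperCoord j ∉ σ) (b : A j) :
    Pi.mulSingle (lowerCoord j) (s j _ b⁻¹) * Pi.mulSingle (upperCoord j) (s j _ b) ∈
      faceSubgroup Y s (fun k => idxN hn k.val) σ := by
  have hlo₀ : lowerCoord j ≠ i₀ := (ne_of_mem_of_not_mem hi₀ hlo).symm
  -- `z̄_{i₀, j}(b) * z̄_{i₀, j + n}(b⁻¹)`, whose entries at `i₀` cancel
  convert Subgroup.mul_mem _
    (mulSingle_mul_mulSingle_mem_faceSubgroup (c := fun k => idxN hn k.val) hi₀ hlo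
      (idxN_lowerCoord hn j) b)
    (mulSingle_mul_mulSingle_mem_faceSubgroup (c := fun k => idxN hn k.val) hi₀ hup
      (idxN_upperCoord hn j) b⁻¹) using 1
  rw [(Pi.mulSingle_commute hlo₀ _ _).mul_mul_mul_comm, ← Pi.mulSingle_mul, ← map_mul,
    mul_inv_cancel, map_one, Pi.mulSingle_one, one_mul, inv_inv]

lemma map_upperReading_faceSubgroup (hn : 0 < n)
    (hρs : ∀ j i a, ρ i (s j i a) = Pi.mulSingle j a) {i₀ : Fin (2 * n)} (hi₀ : i₀ ∈ σ)
    (hT : ∀ j ∈ T, lowerCoord j ∉ σ ∧ upperCoord j ∉ σ) :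
    (faceSubgroup Y s (fun k => idxN hn k.val) σ ⊓ (restrictHom G σ).ker).map
      (upperReading ρ T) = ⊤ := by
  refine eq_top_iff.2 fun a _ => Subgroup.pi_mem_of_mulSingle_mem a fun j => ?_
  obtain ⟨hlo, hup⟩ := hT j j.2
  refine ⟨Pi.mulSingle (lowerCoord j.1) (s j (lowerCoord j) (a j)⁻¹) *
    Pi.mulSingle (upperCoord j.1) (s j (upperCoord j) (a j)), ⟨?_, ?_⟩, ?_⟩
  · exact mulSingle_mul_mulSingle_mem_faceSubgroup_of_pair hn hi₀ hlo hup (a j)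
  · exact MonoidHom.mem_ker.2 (by rw [map_mul, restrictHom_mulSingle_of_notMem hlo,
      restrictHom_mulSingle_of_notMem hup, mul_one])
  · funext j'
    by_cases hj : j' = j
    · subst hj
      simp [Pi.mulSingle_eq_of_ne (lowerCoord_ne_upperCoord j'.1 j'.1).symm, hρs]
    · have hj' : upperCoord j'.1 ≠ upperCoord j.1 :=
        upperCoord_injective.ne (Subtype.coe_injective.ne hj)
      simp [Pi.mulSingle_eq_of_ne (lowerCoord_ne_upperCoord j.1 j'.1).symm,
        Pi.mulSingle_eq_of_ne hj', Pi.mulSingle_eq_of_ne hj]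

noncomputable def faceSubgroupEquiv (hn : 0 < n) (hρs : ∀ j i a, ρ i (s j i a) = Pi.mulSingle j a)
    (hρY : ∀ i, ∀ y ∈ Y i, ρ i y = 1)
    (hgen : ∀ i, Subgroup.closure (Y i ∪ ⋃ j, Set.range (s j i)) = ⊤)
    (hT : ∀ j, j ∈ T ↔ lowerCoord j ∉ σ ∧ upperCoord j ∉ σ)
    (hσ : ∀ j, lowerCoord j ∉ σ ∨ upperCoord j ∉ σ) (hσ₀ : σ.Nonempty) :
    faceSubgroup Y s (fun k => idxN hn k.val) σ ≃* (∀ j : T, A j) × ∀ i : σ, G i :=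
  MulEquiv.ofBijective _ <| MonoidHom.bijective_prod_comp_subtype _ _
    (map_restrictHom_faceSubgroup hgen fun j => (hσ j).elim
      (fun h => ⟨_, h, idxN_lowerCoord hn j⟩) (fun h => ⟨_, h, idxN_upperCoord hn j⟩))
    (map_upperReading_faceSubgroup hn hρs hσ₀.choose_spec fun j => (hT j).1)
    (fun _ hh hΨ hθ => eq_one_of_mem_faceSubgroup hn hρs hρY
      (fun j hj => by by_contra! h; exact hj ((hT j).2 h)) hh hθ hΨ)

end Pairs

theorem stmt_5
    (n : ℕ) (hn : 3 ≤ n)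
    (A : Fin n → Type) [∀ j, CommGroup (A j)]
    [∀ j, Module.Finite ℤ (Additive (A j))]
    (G : Fin (2 * n) → Type) [∀ i, Group (G i)]
    (φ : ∀ i, G i →* (∀ j, A j)) (hφ : ∀ i, Function.Surjective (φ i))
    (s : ∀ (j : Fin n) (i : Fin (2 * n)), A j →* G i)
    (Y : ∀ i, Set (G i))
    (hYker : ∀ i, ∀ y ∈ Y i, φ i y = 1)
    (hYgen : ∀ i, Subgroup.closure (Y i ∪ ⋃ j, Set.range (s j i)) = ⊤)
    (p : ℕ) (hp : p < 6) (t : ℕ) (ht : t < 3)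
    (ht1 : t ≠ p % 3) (ht2 : t ≠ (p + 1) % 3) :
    Nonempty
      (↥(Subgroup.closure (⋃ i ∈ (alphaF n p ∪ alphaF n ((p + 1) % 6)),
            (Ybar Y i ∪ ⋃ j ∈ (alphaF n p ∪ alphaF n ((p + 1) % 6))ᶜ,
              Zbar s (idxN (by omega : 0 < n) j.val) i j)))
        ≃* ((∀ j : ↥(alphaN n t), A j.1) × (∀ i : ↥(alphaF n p ∪ alphaF n ((p + 1) % 6)), G i.1))) := by
  choose ρ hρs hρY using fun i => exists_retraction (hφ i) (fun j => s j i) (hYker i) (hYgen i)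
  exact ⟨faceSubgroupEquiv (σ := faceCoords n p) (by omega) (fun j i => hρs i j) hρY hYgen
    (mem_alphaN_iff hn hp ht ht1 ht2) (lowerCoord_notMem_or_upperCoord_notMem hn hp)
    (faceCoords_nonempty hn hp)⟩

end SB
end

section
/- The nonstandard face subgroup G^{36}_N = ⟨⋃_{i∈α_{36}}( Ȳ_i ∪ ⋃_{j∈α_{45}} Z̄^{j*}_{i,j} ∪ ⋃_{j∈α_3} Z̄^j_{i, j−|α_{12}|} )⟩ of Ker(Φ) is isomorphic, as a group, to ∏_{i∈α_{36}} G_i (that is, to G_{α_3} × G_{α_6}). -/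
/-! Restricting to the coordinates `S = α_3 ∪ α_6` maps the face subgroup onto `G_S`, since every
generator `y` or `s^j_i(b)` of `G_i` (`i ∈ S`) is the `S`-part of a generator. For injectivity,
each label `j` has exactly one partner coordinate `k_j ∉ S`, and only the generators in some
`Z̄^j_{i,k_j}` touch it. The endomorphism `ψ_i = ∏_j φ_i ∘ s^j_i ∘ pr_j` of `L` is surjective
because `G_i` is generated by `Y_i ⊆ Ker φ_i` and the sections, hence bijective as `L` is
Hopfian; so `θ_i = ψ_i⁻¹ ∘ φ_i` sends `s^j_i(b)` to `b` in slot `j` and kills `Y_i`. On every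
generator the `k_j`-coordinate is then `s^j_{k_j}` of the inverse of the `j`-th component of
`∏_{i ∈ S} θ_i(g_i)`, a homomorphic function of the `S`-part: this is a retraction. -/

namespace SB

theorem injective_of_surjective_of_moduleFinite {M : Type*} [CommGroup M]
    [Module.Finite ℤ (Additive M)] (f : M →* M) (hf : Function.Surjective f) :
    Function.Injective f :=
  OrzechProperty.injective_of_surjective_endomorphism (MonoidHom.toAdditive f).toIntLinearMap hf

instance moduleFinite_additive_pi {J : Type*} [Finite J] {A : J → Type*} [∀ j, CommGroup (A j)]
    [∀ j, Module.Finite ℤ (Additive (A j))] : Module.Finite ℤ (Additive (∀ j, A j)) :=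
  Module.Finite.equiv (AddEquiv.piAdditive A).symm.toIntLinearEquiv

section LeftInverse

variable {J : Type*} [Fintype J] [DecidableEq J] {A : J → Type*} [∀ j, CommGroup (A j)]
  {H : Type*} [Group H]

theorem prod_comp_sections_mulSingle (φ : H →* ∀ j, A j) (s : ∀ j, A j →* H) (j : J) (a : A j) :
    (∏ j', (φ.comp (s j')).comp (Pi.evalMonoidHom A j')) (Pi.mulSingle j a) = φ (s j a) := by
  rw [MonoidHom.finsetProd_apply, Fintype.prod_eq_single j fun j' hj' => ?_]
  · simp
  · simp [Pi.mulSingle_eq_of_ne hj']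

theorem exists_leftInverse_sections [∀ j, Module.Finite ℤ (Additive (A j))]
    (φ : H →* ∀ j, A j) (hφ : Function.Surjective φ) (s : ∀ j, A j →* H) (Y : Set H)
    (hY : ∀ y ∈ Y, φ y = 1) (hgen : Subgroup.closure (Y ∪ ⋃ j, Set.range (s j)) = ⊤) :
    ∃ θ : H →* ∀ j, A j, (∀ j a, θ (s j a) = Pi.mulSingle j a) ∧ ∀ y ∈ Y, θ y = 1 := by
  set ψ := ∏ j, (φ.comp (s j)).comp (Pi.evalMonoidHom A j)
  have hψ_surj : Function.Surjective ψ := by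
    have hrange : φ.range ≤ ψ.range := by
      rw [MonoidHom.range_eq_map, ← hgen, MonoidHom.map_closure, Subgroup.closure_le]
      rintro _ ⟨g, hg | hg, rfl⟩
      · exact hY g hg ▸ one_mem _
      · obtain ⟨j, a, rfl⟩ := Set.mem_iUnion.mp hg
        exact ⟨Pi.mulSingle j a, prod_comp_sections_mulSingle φ s j a⟩
    exact MonoidHom.range_eq_top.mp (top_le_iff.mp (MonoidHom.range_eq_top.mpr hφ ▸ hrange))
  let e := MulEquiv.ofBijective ψ ⟨injective_of_surjective_of_moduleFinite ψ hψ_surj, hψ_surj⟩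
  refine ⟨e.symm.toMonoidHom.comp φ, fun j a => ?_, fun y hy => by simp [hY y hy]⟩
  rw [MonoidHom.comp_apply, MulEquiv.coe_toMonoidHom, MulEquiv.symm_apply_eq]
  exact (prod_comp_sections_mulSingle φ s j a).symm

end LeftInverse

section Face

variable {ι J : Type*} {A : J → Type*} [∀ j, CommGroup (A j)] {G : ι → Type*} [∀ i, Group (G i)]

def faceGenerators [DecidableEq ι] (s : ∀ j i, A j →* G i) (Y : ∀ i, Set (G i)) (S : Finset ι)
    (k : J → ι) : Set (∀ i, G i) :=
  ⋃ i ∈ S, (Pi.mulSingle i '' Y i ∪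
    ⋃ j, Set.range fun b : A j => Pi.mulSingle i (s j i b) * Pi.mulSingle (k j) (s j (k j) b⁻¹))

def faceProjection (S : Finset ι) : (∀ i, G i) →* ∀ i : S, G i :=
  MonoidHom.pi fun i => Pi.evalMonoidHom G i

def faceWeight (θ : ∀ i, G i →* ∀ j, A j) (S : Finset ι) : (∀ i : S, G i) →* ∀ j, A j :=
  ∏ i : S, (θ i).comp (Pi.evalMonoidHom _ i)

open Classical in
noncomputable def faceRetraction (s : ∀ j i, A j →* G i) (θ : ∀ i, G i →* ∀ j, A j)
    (S : Finset ι) (k : J → ι) : (∀ i : S, G i) →* ∀ i, G i where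
  toFun p i :=
    if h : i ∈ S then p ⟨i, h⟩
    else if h' : ∃ j, k j = i then s h'.choose i (faceWeight θ S p h'.choose)⁻¹ else 1
  map_one' := by ext; simp
  map_mul' p q := by ext; simp only [Pi.mul_apply, map_mul]; split_ifs <;> simp [mul_comm]

@[simp]
theorem faceProjection_apply (S : Finset ι) (g : ∀ i, G i) (i : S) : faceProjection S g i = g i :=
  rfl

theorem faceProjection_mulSingle_of_mem [DecidableEq ι] {S : Finset ι} {i : ι} (hi : i ∈ S)
    (x : G i) : faceProjection S (Pi.mulSingle i x) = Pi.mulSingle ⟨i, hi⟩ x := by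
  ext i'
  rcases eq_or_ne i' ⟨i, hi⟩ with rfl | hne
  · simp
  · simp [Pi.mulSingle_eq_of_ne hne, Pi.mulSingle_eq_of_ne (Subtype.coe_ne_coe.mpr hne)]

theorem faceProjection_mulSingle_of_notMem [DecidableEq ι] {S : Finset ι} {i : ι} (hi : i ∉ S)
    (x : G i) : faceProjection S (Pi.mulSingle i x) = 1 := by
  ext i'
  simp [Pi.mulSingle_eq_of_ne (show (i' : ι) ≠ i from fun h => hi (h ▸ i'.2))]

theorem faceWeight_mulSingle [DecidableEq ι] (θ : ∀ i, G i →* ∀ j, A j) (S : Finset ι) (i : S)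
    (x : G i) : faceWeight θ S (Pi.mulSingle i x) = θ i x := by
  rw [faceWeight, MonoidHom.finsetProd_apply, Fintype.prod_eq_single i fun i' hi' => ?_]
  · simp
  · simp [Pi.mulSingle_eq_of_ne hi']

theorem faceRetraction_apply_of_mem (s : ∀ j i, A j →* G i) (θ : ∀ i, G i →* ∀ j, A j)
    {S : Finset ι} (k : J → ι) (p : ∀ i : S, G i) {i : ι} (hi : i ∈ S) :
    faceRetraction s θ S k p i = p ⟨i, hi⟩ :=
  dif_pos hi

theorem faceRetraction_apply_partner (s : ∀ j i, A j →* G i) (θ : ∀ i, G i →* ∀ j, A j)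
    {S : Finset ι} {k : J → ι} (hk : Function.Injective k) (p : ∀ i : S, G i) {j : J}
    (hj : k j ∉ S) : faceRetraction s θ S k p (k j) = s j (k j) (faceWeight θ S p j)⁻¹ := by
  have h : ∃ j', k j' = k j := ⟨j, rfl⟩
  have hc : h.choose = j := hk h.choose_spec
  refine ((dif_neg hj).trans (dif_pos h)).trans ?_
  generalize h.choose = j' at hc ⊢
  subst hc
  rfl

theorem faceRetraction_apply_of_notMem (s : ∀ j i, A j →* G i) (θ : ∀ i, G i →* ∀ j, A j)
    {S : Finset ι} {k : J → ι} (p : ∀ i : S, G i) {i : ι} (hi : i ∉ S)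
    (hik : i ∉ Set.range k) : faceRetraction s θ S k p i = 1 :=
  (dif_neg hi).trans (dif_neg hik)

theorem faceRetraction_faceProjection_eq_self (s : ∀ j i, A j →* G i)
    (θ : ∀ i, G i →* ∀ j, A j) {S : Finset ι} {k : J → ι} (hk : Function.Injective k)
    (g : ∀ i, G i)
    (hpartner : ∀ j, k j ∉ S → g (k j) = s j (k j) (faceWeight θ S (faceProjection S g) j)⁻¹)
    (hsupp : ∀ i ∉ S, i ∉ Set.range k → g i = 1) :
    faceRetraction s θ S k (faceProjection S g) = g := by
  funext i
  by_cases hi : i ∈ S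
  · exact faceRetraction_apply_of_mem s θ k _ hi
  by_cases hik : i ∈ Set.range k
  · obtain ⟨j, rfl⟩ := hik
    rw [faceRetraction_apply_partner s θ hk _ hi, hpartner j hi]
  · rw [faceRetraction_apply_of_notMem s θ _ hi hik, hsupp i hi hik]

end Face

section FaceSubgroup

variable {ι J : Type*} [DecidableEq ι] {A : J → Type*} [∀ j, CommGroup (A j)]
  {G : ι → Type*} [∀ i, Group (G i)] {s : ∀ j i, A j →* G i} {θ : ∀ i, G i →* ∀ j, A j}
  {Y : ∀ i, Set (G i)} {S : Finset ι} {k : J → ι}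

theorem faceRetraction_faceProjection_mulSingle (hk : Function.Injective k)
    (hkS : ∀ j, k j ∉ S) {i : ι} (hi : i ∈ S) {y : G i} (hy : θ i y = 1) :
    faceRetraction s θ S k (faceProjection S (Pi.mulSingle i y)) = Pi.mulSingle i y := by
  have hweight : faceWeight θ S (faceProjection S (Pi.mulSingle i y)) = 1 := by
    rw [faceProjection_mulSingle_of_mem hi, faceWeight_mulSingle, hy]
  refine faceRetraction_faceProjection_eq_self s θ hk _ (fun j _ => ?_) fun i' hi' _ => ?_
  · rw [hweight, Pi.one_apply, inv_one, map_one,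
      Pi.mulSingle_eq_of_ne fun h : k j = i => hkS j (h ▸ hi)]
  · exact Pi.mulSingle_eq_of_ne (fun h : i' = i => hi' (h ▸ hi)) _

theorem faceRetraction_faceProjection_mulSingle_mul_mulSingle [DecidableEq J]
    (hk : Function.Injective k) (hkS : ∀ j, k j ∉ S)
    (hθs : ∀ i ∈ S, ∀ j a, θ i (s j i a) = Pi.mulSingle j a) {i : ι} (hi : i ∈ S) (j : J)
    (b : A j) :
    faceRetraction s θ S k (faceProjection S
        (Pi.mulSingle i (s j i b) * Pi.mulSingle (k j) (s j (k j) b⁻¹))) =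
      Pi.mulSingle i (s j i b) * Pi.mulSingle (k j) (s j (k j) b⁻¹) := by
  have hweight : faceWeight θ S (faceProjection S
      (Pi.mulSingle i (s j i b) * Pi.mulSingle (k j) (s j (k j) b⁻¹))) = Pi.mulSingle j b := by
    rw [map_mul, faceProjection_mulSingle_of_mem hi, faceProjection_mulSingle_of_notMem (hkS j),
      mul_one, faceWeight_mulSingle, hθs i hi]
  have hne : ∀ j', k j' ≠ i := fun j' h => hkS j' (h ▸ hi)
  refine faceRetraction_faceProjection_eq_self s θ hk _ (fun j' _ => ?_) fun i' hi' hik => ?_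
  · rw [hweight, Pi.mul_apply, Pi.mulSingle_eq_of_ne (hne j'), one_mul]
    rcases eq_or_ne j' j with rfl | hj
    · simp
    · rw [Pi.mulSingle_eq_of_ne (hk.ne hj), Pi.mulSingle_eq_of_ne hj, inv_one, map_one]
  · rw [Pi.mul_apply, Pi.mulSingle_eq_of_ne (fun h : i' = i => hi' (h ▸ hi)),
      Pi.mulSingle_eq_of_ne (fun h => hik ⟨j, h.symm⟩), one_mul]

theorem faceRetraction_faceProjection_of_mem_closure [DecidableEq J] (hk : Function.Injective k)
    (hkS : ∀ j, k j ∉ S) (hθs : ∀ i ∈ S, ∀ j a, θ i (s j i a) = Pi.mulSingle j a)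
    (hθY : ∀ i ∈ S, ∀ y ∈ Y i, θ i y = 1) {g : ∀ i, G i}
    (hg : g ∈ Subgroup.closure (faceGenerators s Y S k)) :
    faceRetraction s θ S k (faceProjection S g) = g := by
  refine MonoidHom.eqOn_closure (f := (faceRetraction s θ S k).comp (faceProjection S))
    (g := MonoidHom.id _) (fun x hx => ?_) hg
  simp only [faceGenerators, Set.mem_iUnion, Set.mem_union, Set.mem_image, Set.mem_range] at hx
  obtain ⟨i, hi, ⟨y, hy, rfl⟩ | ⟨j, b, rfl⟩⟩ := hx
  · exact faceRetraction_faceProjection_mulSingle hk hkS hi (hθY i hi y hy)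
  · exact faceRetraction_faceProjection_mulSingle_mul_mulSingle hk hkS hθs hi j b

theorem map_faceProjection_closure_faceGenerators (hkS : ∀ j, k j ∉ S)
    (hgen : ∀ i ∈ S, Subgroup.closure (Y i ∪ ⋃ j, Set.range (s j i)) = ⊤) :
    (Subgroup.closure (faceGenerators s Y S k)).map (faceProjection S) = ⊤ := by
  refine eq_top_iff.mpr fun p _ => Subgroup.pi_mem_of_mulSingle_mem p fun i => ?_
  suffices h : (⊤ : Subgroup (G i)).map (MonoidHom.mulSingle (fun i : S => G i) i) ≤
      (Subgroup.closure (faceGenerators s Y S k)).map (faceProjection S) from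
    h ⟨p i, trivial, rfl⟩
  rw [← hgen i i.2, MonoidHom.map_closure, Subgroup.closure_le]
  rintro _ ⟨x, hx | hx, rfl⟩
  · refine ⟨Pi.mulSingle i x, Subgroup.subset_closure ?_, faceProjection_mulSingle_of_mem i.2 x⟩
    exact Set.mem_biUnion i.2 (Or.inl ⟨x, hx, rfl⟩)
  · obtain ⟨j, a, rfl⟩ := Set.mem_iUnion.mp hx
    refine ⟨_, Subgroup.subset_closure
      (Set.mem_biUnion i.2 (Or.inr (Set.mem_iUnion.mpr ⟨j, a, rfl⟩))), ?_⟩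
    rw [map_mul, faceProjection_mulSingle_of_mem i.2, faceProjection_mulSingle_of_notMem (hkS j),
      mul_one]
    rfl

theorem nonempty_closure_faceGenerators_mulEquiv [DecidableEq J] (hk : Function.Injective k)
    (hkS : ∀ j, k j ∉ S) (hθs : ∀ i ∈ S, ∀ j a, θ i (s j i a) = Pi.mulSingle j a)
    (hθY : ∀ i ∈ S, ∀ y ∈ Y i, θ i y = 1)
    (hgen : ∀ i ∈ S, Subgroup.closure (Y i ∪ ⋃ j, Set.range (s j i)) = ⊤) :
    Nonempty (Subgroup.closure (faceGenerators s Y S k) ≃* ∀ i : S, G i) := by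
  set H := Subgroup.closure (faceGenerators s Y S k)
  refine ⟨MulEquiv.ofBijective ((faceProjection S).comp H.subtype) ⟨fun g g' hgg' => ?_, ?_⟩⟩
  · have hleft (g : H) := faceRetraction_faceProjection_of_mem_closure hk hkS hθs hθY g.2
    exact Subtype.ext ((hleft g).symm.trans ((congrArg _ hgg').trans (hleft g')))
  · rw [← MonoidHom.range_eq_top, MonoidHom.range_comp, Subgroup.range_subtype]
    exact map_faceProjection_closure_faceGenerators hkS hgen

end FaceSubgroup

section Labels

theorem mem_alphaF {n p : ℕ} {x : Fin (2 * n)} :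
    x ∈ alphaF n p ↔ cc n p ≤ x ∧ x < cc n (p + 1) := by
  simp [alphaF]

theorem idxN_val_of_lt {n : ℕ} (hn : 0 < n) {k : ℕ} (hk : k < n) : (idxN hn k : ℕ) = k :=
  Nat.mod_eq_of_lt hk

theorem idxN_val_of_le {n : ℕ} (hn : 0 < n) {k : ℕ} (hnk : n ≤ k) (hk : k < 2 * n) :
    (idxN hn k : ℕ) = k - n := by
  show k % n = k - n
  rw [Nat.mod_eq_sub_mod hnk, Nat.mod_eq_of_lt (by omega)]

theorem idx_val_of_lt {n : ℕ} (hn : 0 < n) {k : ℕ} (hk : k < 2 * n) : (idx hn k : ℕ) = k :=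
  Nat.mod_eq_of_lt hk

-- `cc n 2 = |α_{12}|`, so label `j` is paired with `j + n ∈ α_{45}` if `j ∈ α_{12}`
-- and with `j - |α_{12}| ∈ α_{12}` if `j ∈ α_3`.
def partnerCoord (n : ℕ) (j : Fin n) : Fin (2 * n) :=
  if j.val < cc n 2 then ⟨j + n, by omega⟩ else ⟨j - cc n 2, by omega⟩

theorem partnerCoord_val {n : ℕ} (j : Fin n) :
    (partnerCoord n j : ℕ) = if j.val < cc n 2 then j + n else j - cc n 2 := by
  unfold partnerCoord
  split_ifs <;> rfl

theorem partnerCoord_injective (n : ℕ) : Function.Injective (partnerCoord n) := by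
  intro j j' h
  have h := congrArg Fin.val h
  rw [partnerCoord_val, partnerCoord_val] at h
  ext
  split_ifs at h <;> omega

theorem partnerCoord_notMem (n : ℕ) (j : Fin n) :
    partnerCoord n j ∉ alphaF n 2 ∪ alphaF n 5 := by
  simp only [Finset.mem_union, mem_alphaF, partnerCoord_val, cc]
  split_ifs <;> omega

theorem partnerCoord_idxN_of_mem_alphaF_three_four {n : ℕ} (hn : 0 < n) {k : Fin (2 * n)}
    (hk : k ∈ alphaF n 3 ∪ alphaF n 4) : partnerCoord n (idxN hn k) = k := by
  simp [mem_alphaF, cc] at hk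
  ext
  rw [partnerCoord_val, idxN_val_of_le hn (by omega) (by omega), cc]
  split_ifs <;> omega

theorem partnerCoord_idxN_of_mem_alphaF_two {n : ℕ} (hn : 0 < n) {j : Fin (2 * n)}
    (hj : j ∈ alphaF n 2) : partnerCoord n (idxN hn j) = idx hn (j - cc n 2) := by
  simp [mem_alphaF, cc] at hj
  ext
  rw [partnerCoord_val, idxN_val_of_lt hn (by omega), idx_val_of_lt hn (by omega), cc]
  split_ifs <;> omega

theorem exists_idxN_eq {n : ℕ} (hn : 0 < n) (j : Fin n) :
    ∃ k ∈ alphaF n 2 ∪ (alphaF n 3 ∪ alphaF n 4), idxN hn k = j := by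
  by_cases hj : j.val < cc n 2
  · refine ⟨⟨j + n, by omega⟩, ?_, Fin.ext ?_⟩
    · simp [mem_alphaF, cc] at hj ⊢
      omega
    · rw [idxN_val_of_le hn (by simp) (by omega), Nat.add_sub_cancel]
  · refine ⟨⟨j, by omega⟩, ?_, Fin.ext (idxN_val_of_lt hn j.2)⟩
    simp [mem_alphaF, cc] at hj ⊢
    omega

end Labels

theorem iUnion_zbar_union_eq_iUnion_partnerCoord {n : ℕ} (hn : 0 < n) {A : Fin n → Type}
    [∀ j, CommGroup (A j)] {G : Fin (2 * n) → Type} [∀ i, Group (G i)]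
    (s : ∀ (j : Fin n) (i : Fin (2 * n)), A j →* G i) (i : Fin (2 * n)) :
    (⋃ k ∈ alphaF n 3 ∪ alphaF n 4, Zbar s (idxN hn k.val) i k) ∪
        ⋃ j ∈ alphaF n 2, Zbar s (idxN hn j.val) i (idx hn (j.val - cc n 2)) =
      ⋃ j, Zbar s j i (partnerCoord n j) := by
  ext x
  simp only [Set.mem_union, Set.mem_iUnion, exists_prop]
  constructor
  · rintro (⟨k, hk, hx⟩ | ⟨j, hj, hx⟩)
    · exact ⟨idxN hn k, by rwa [partnerCoord_idxN_of_mem_alphaF_three_four hn hk]⟩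
    · exact ⟨idxN hn j, by rwa [partnerCoord_idxN_of_mem_alphaF_two hn hj]⟩
  · rintro ⟨j, hx⟩
    obtain ⟨k, hk, rfl⟩ := exists_idxN_eq hn j
    rcases Finset.mem_union.mp hk with hk | hk
    · exact Or.inr ⟨k, hk, by rwa [partnerCoord_idxN_of_mem_alphaF_two hn hk] at hx⟩
    · exact Or.inl ⟨k, hk, by rwa [partnerCoord_idxN_of_mem_alphaF_three_four hn hk] at hx⟩

theorem iUnion_ybar_union_zbar_eq_faceGenerators {n : ℕ} (hn : 0 < n) {A : Fin n → Type}
    [∀ j, CommGroup (A j)] {G : Fin (2 * n) → Type} [∀ i, Group (G i)]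
    (s : ∀ (j : Fin n) (i : Fin (2 * n)), A j →* G i) (Y : ∀ i, Set (G i)) :
    ⋃ i ∈ alphaF n 2 ∪ alphaF n 5, (Ybar Y i
        ∪ (⋃ j ∈ alphaF n 3 ∪ alphaF n 4, Zbar s (idxN hn j.val) i j)
        ∪ ⋃ j ∈ alphaF n 2, Zbar s (idxN hn j.val) i (idx hn (j.val - cc n 2))) =
      faceGenerators s Y (alphaF n 2 ∪ alphaF n 5) (partnerCoord n) := by
  refine Set.iUnion₂_congr fun i _ => ?_
  rw [Set.union_assoc, iUnion_zbar_union_eq_iUnion_partnerCoord]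
  rfl

theorem stmt_7
    (n : ℕ) (hn : 3 ≤ n)
    (A : Fin n → Type) [∀ j, CommGroup (A j)]
    [∀ j, Module.Finite ℤ (Additive (A j))]
    (G : Fin (2 * n) → Type) [∀ i, Group (G i)]
    (φ : ∀ i, G i →* (∀ j, A j)) (hφ : ∀ i, Function.Surjective (φ i))
    (s : ∀ (j : Fin n) (i : Fin (2 * n)), A j →* G i)
    (Y : ∀ i, Set (G i))
    (hYker : ∀ i, ∀ y ∈ Y i, φ i y = 1)
    (hYgen : ∀ i, Subgroup.closure (Y i ∪ ⋃ j, Set.range (s j i)) = ⊤)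
    :
    Nonempty
      (↥(Subgroup.closure (⋃ i ∈ (alphaF n 2 ∪ alphaF n 5),
            (Ybar Y i
              ∪ (⋃ j ∈ alphaF n 3 ∪ alphaF n 4, Zbar s (idxN (by omega : 0 < n) j.val) i j)
              ∪ ⋃ j ∈ alphaF n 2,
                  Zbar s (idxN (by omega : 0 < n) j.val) i
                    (idx (by omega : 0 < n) (j.val - cc n 2)))))
        ≃* (∀ i : ↥(alphaF n 2 ∪ alphaF n 5), G i.1)) := by
  choose θ hθs hθY using fun i =>
    exists_leftInverse_sections (φ i) (hφ i) (fun j => s j i) (Y i) (hYker i) (hYgen i)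
  rw [iUnion_ybar_union_zbar_eq_faceGenerators (by omega)]
  exact nonempty_closure_faceGenerators_mulEquiv (partnerCoord_injective n)
    (partnerCoord_notMem n) (fun i _ => hθs i) (fun i _ => hθY i) fun i _ => hYgen i

end SB
end

section
/- For every p ∈ {1,…,6}, the standard edge subgroup G^p = ⟨⋃_{i∈α_p}( Ȳ_i ∪ ⋃_{j∈α_{τ(p)}} Z̄^{j*}_{i,j} )⟩ of Ker(Φ), where τ(1) = {2,3,4}, τ(2) = {1,5,6}, τ(3) = {4,5,6}, τ(4) = {1,2,3}, τ(5) = {1,2,6}, τ(6) = {3,4,5}, is isomorphic, as a group, to ∏_{i∈α_p} G_i. -/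
/-! The map `f_i : a ↦ ∏_j φ_i (s^j_i a_j)` is a surjective endomorphism of the finitely
generated abelian group `L` (its image contains `φ_i` of every generator of `G_i`), hence an
automorphism, and `ψ_i = f_i⁻¹ ∘ φ_i` kills `Y_i` and sends `s^j_i b` to `b` in slot `j`.
The coordinates in `T = α_{τ(p)}` lie outside `α_p` and meet each residue class mod `n` exactly
once, so `Θ g = (g on α_p, s^{j*}_j ((∏_i ψ_i g_i)_{j*}⁻¹) at j ∈ T, 1 elsewhere)` is an injective
homomorphism `∏_{i ∈ α_p} G_i → G`. It maps the generators `y` and `s^j_i b` of the product to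
the generators `ȳ` and `z̄^j_{i,k} b` of `G^p`, so its image is `G^p`. -/

namespace SB

/-- The index sets τ(p) (0-based): for the standard edge subgroup `G^{p+1}`,
the section generators target the coordinates in `α_{τ(p)}`. -/
def tau : ℕ → Finset ℕ
  | 0 => {1, 2, 3}
  | 1 => {0, 4, 5}
  | 2 => {3, 4, 5}
  | 3 => {0, 1, 2}
  | 4 => {0, 1, 5}
  | _ => {2, 3, 4}


end SB

theorem MonoidHom.injective_of_surjective_of_moduleFinite {M : Type*} [CommGroup M]
    [Module.Finite ℤ (Additive M)] (f : M →* M) (hf : Function.Surjective f) :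
    Function.Injective f :=
  OrzechProperty.injective_of_surjective_endomorphism (MonoidHom.toAdditive f).toIntLinearMap hf

instance Additive.moduleFinite_pi {ι : Type*} [Finite ι] {A : ι → Type*}
    [∀ j, CommGroup (A j)] [∀ j, Module.Finite ℤ (Additive (A j))] :
    Module.Finite ℤ (Additive (∀ j, A j)) :=
  inferInstanceAs (Module.Finite ℤ (∀ j, Additive (A j)))

section PiCoprod

variable {ι : Type*} [Fintype ι] {G : ι → Type*} [∀ i, Group (G i)] {M : Type*} [CommGroup M]

def MonoidHom.piCoprod (ψ : ∀ i, G i →* M) : (∀ i, G i) →* M :=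
  MonoidHom.noncommPiCoprod ψ fun _ _ _ _ _ => Commute.all _ _

@[simp]
lemma MonoidHom.piCoprod_mulSingle [DecidableEq ι] (ψ : ∀ i, G i →* M) (i : ι) (x : G i) :
    MonoidHom.piCoprod ψ (Pi.mulSingle i x) = ψ i x :=
  MonoidHom.noncommPiCoprod_mulSingle _ _ _

end PiCoprod

section SectionEndo

variable {κ : Type*} [Fintype κ] [DecidableEq κ] {A : κ → Type*} [∀ j, CommGroup (A j)]
  {H : Type*} [Group H] (φ : H →* ∀ j, A j) (s : ∀ j, A j →* H)

def sectionEndo : (∀ j, A j) →* ∀ j, A j :=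
  MonoidHom.piCoprod fun j => φ.comp (s j)

lemma sectionEndo_mulSingle (j : κ) (b : A j) :
    sectionEndo φ s (Pi.mulSingle j b) = φ (s j b) :=
  MonoidHom.piCoprod_mulSingle _ _ _

variable {φ s} {Y : Set H} (hφ : Function.Surjective φ) (hY : ∀ y ∈ Y, φ y = 1)
  (hgen : Subgroup.closure (Y ∪ ⋃ j, Set.range (s j)) = ⊤)
include hφ hY hgen

lemma sectionEndo_surjective : Function.Surjective (sectionEndo φ s) := by
  rw [← MonoidHom.range_eq_top, eq_top_iff, ← MonoidHom.range_eq_top.mpr hφ,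
    MonoidHom.range_eq_map, ← hgen, MonoidHom.map_closure, Subgroup.closure_le]
  rintro _ ⟨x, hx | hx, rfl⟩
  · rw [SetLike.mem_coe, hY x hx]
    exact one_mem _
  · obtain ⟨j, b, rfl⟩ := Set.mem_iUnion.mp hx
    exact ⟨Pi.mulSingle j b, sectionEndo_mulSingle φ s j b⟩

theorem exists_eq_one_and_apply_eq_mulSingle [∀ j, Module.Finite ℤ (Additive (A j))] :
    ∃ ψ : H →* ∀ j, A j, (∀ y ∈ Y, ψ y = 1) ∧ ∀ j b, ψ (s j b) = Pi.mulSingle j b := by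
  have hsurj := sectionEndo_surjective hφ hY hgen
  let e := MulEquiv.ofBijective (sectionEndo φ s)
    ⟨(sectionEndo φ s).injective_of_surjective_of_moduleFinite hsurj, hsurj⟩
  exact ⟨e.symm.toMonoidHom.comp φ, fun y hy => by simp [hY y hy],
    fun j b => e.symm_apply_eq.mpr (sectionEndo_mulSingle φ s j b).symm⟩

end SectionEndo

lemma Nat.mod_eq_ite_of_lt_two_mul {x n : ℕ} (hx : x < 2 * n) :
    x % n = if x < n then x else x - n := by
  split_ifs with h
  · exact Nat.mod_eq_of_lt h
  · rw [Nat.mod_eq_sub_mod (not_lt.mp h), Nat.mod_eq_of_lt (by omega)]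

lemma Pi.mulSingle_val_apply {ι : Type*} [DecidableEq ι] {p : ι → Prop} {M : ι → Type*}
    [∀ i, One (M i)] (i : Subtype p) (x : M i) (k : Subtype p) :
    Pi.mulSingle (i : ι) x k = Pi.mulSingle (M := fun k : Subtype p => M k) i x k :=
  Function.update_apply_of_injective _ Subtype.val_injective i x k

namespace SB

section EdgeSubgroup

variable {n : ℕ} {A : Fin n → Type} [∀ j, CommGroup (A j)]
  {G : Fin (2 * n) → Type} [∀ i, Group (G i)]
  (P T : Finset (Fin (2 * n))) (lab : Fin (2 * n) → Fin n)
  (s : ∀ (j : Fin n) (i : Fin (2 * n)), A j →* G i) (ψ : ∀ i, G i →* ∀ j, A j)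

noncomputable def edgeEmbedding : (∀ i : P, G i) →* ∀ k, G k :=
  MonoidHom.pi fun k =>
    if h : k ∈ P then Pi.evalMonoidHom (fun i : P => G i) ⟨k, h⟩
    else if k ∈ T then
      (s (lab k) k).comp <| (Pi.evalMonoidHom A (lab k)).comp
        (MonoidHom.piCoprod fun i : P => ψ i)⁻¹
    else 1

variable {P T lab s ψ}

lemma edgeEmbedding_apply_of_mem (g : ∀ i : P, G i) {k : Fin (2 * n)} (hk : k ∈ P) :
    edgeEmbedding P T lab s ψ g k = g ⟨k, hk⟩ := by
  simp [edgeEmbedding, hk]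

lemma edgeEmbedding_injective : Function.Injective (edgeEmbedding P T lab s ψ) :=
  fun g h hgh => funext fun i => by
    simpa only [edgeEmbedding_apply_of_mem _ i.2] using congrFun hgh i

lemma edgeEmbedding_mulSingle_apply (i : P) (x : G i) (k : Fin (2 * n)) :
    edgeEmbedding P T lab s ψ (Pi.mulSingle i x) k =
      if k ∈ P then Pi.mulSingle (i : Fin (2 * n)) x k
      else if k ∈ T then s (lab k) k (ψ i x (lab k))⁻¹ else 1 := by
  by_cases hP : k ∈ P
  · rw [edgeEmbedding_apply_of_mem _ hP, if_pos hP, Pi.mulSingle_val_apply i x ⟨k, hP⟩]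
  · by_cases hT : k ∈ T <;> simp [edgeEmbedding, hP, hT]

lemma edgeEmbedding_mulSingle_of_eq_one (i : P) {x : G i} (hx : ψ i x = 1) :
    edgeEmbedding P T lab s ψ (Pi.mulSingle i x) = Pi.mulSingle (i : Fin (2 * n)) x := by
  funext k
  rw [edgeEmbedding_mulSingle_apply, hx]
  split_ifs with hP hT
  · rfl
  all_goals rw [Pi.mulSingle_eq_of_ne fun h : k = i => hP (h ▸ i.2)]
  rw [Pi.one_apply, inv_one, map_one]

lemma edgeEmbedding_mulSingle_section (hPT : Disjoint P T) (hlab : Set.InjOn lab T)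
    (hψs : ∀ i j b, ψ i (s j i b) = Pi.mulSingle j b) (i : P) {k₀ : Fin (2 * n)}
    (hk₀ : k₀ ∈ T) (b : A (lab k₀)) :
    edgeEmbedding P T lab s ψ (Pi.mulSingle i (s (lab k₀) i b)) =
      Pi.mulSingle (i : Fin (2 * n)) (s (lab k₀) i b) * Pi.mulSingle k₀ (s (lab k₀) k₀ b⁻¹) := by
  funext k
  rw [edgeEmbedding_mulSingle_apply, Pi.mul_apply, hψs]
  split_ifs with hP hT
  · have hk : k ≠ k₀ := fun h => Finset.disjoint_left.mp hPT hP (h ▸ hk₀)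
    rw [Pi.mulSingle_eq_of_ne hk, mul_one]
  · rw [Pi.mulSingle_eq_of_ne (fun h : k = i => hP (h ▸ i.2)), one_mul]
    by_cases hk : k = k₀
    · subst hk
      simp
    · rw [Pi.mulSingle_eq_of_ne (fun h => hk (hlab hT hk₀ h)), Pi.mulSingle_eq_of_ne hk,
        inv_one, map_one]
  · rw [Pi.mulSingle_eq_of_ne (fun h : k = i => hP (h ▸ i.2)),
      Pi.mulSingle_eq_of_ne (fun h : k = k₀ => hT (h ▸ hk₀)), one_mul]

variable {Y : ∀ i, Set (G i)} (hPT : Disjoint P T) (hlab : Set.BijOn lab T Set.univ)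
  (hψY : ∀ i, ∀ y ∈ Y i, ψ i y = 1) (hψs : ∀ i j b, ψ i (s j i b) = Pi.mulSingle j b)
include hPT hlab hψY hψs

lemma range_edgeEmbedding (hgen : ∀ i, Subgroup.closure (Y i ∪ ⋃ j, Set.range (s j i)) = ⊤) :
    (edgeEmbedding P T lab s ψ).range =
      Subgroup.closure (⋃ i ∈ P, (Ybar Y i ∪ ⋃ k ∈ T, Zbar s (lab k) i k)) := by
  set Θ := edgeEmbedding P T lab s ψ
  apply le_antisymm
  · rintro _ ⟨g, rfl⟩
    refine Subgroup.pi_mem_of_mulSingle_mem (H := (Subgroup.closure _).comap Θ) g fun i => ?_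
    suffices h : Subgroup.closure (Y i ∪ ⋃ j, Set.range (s j i)) ≤
        ((Subgroup.closure _).comap Θ).comap (MonoidHom.mulSingle _ i) from
      h (hgen i ▸ Subgroup.mem_top (g i))
    rw [Subgroup.closure_le]
    rintro x (hx | hx) <;> apply Subgroup.subset_closure <;> refine Set.mem_biUnion i.2 ?_
    · rw [MonoidHom.mulSingle_apply, edgeEmbedding_mulSingle_of_eq_one i (hψY i x hx)]
      exact Or.inl ⟨x, hx, rfl⟩
    · obtain ⟨j, b, rfl⟩ := Set.mem_iUnion.mp hx
      obtain ⟨k, hk, rfl⟩ := hlab.surjOn (Set.mem_univ j)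
      rw [MonoidHom.mulSingle_apply, edgeEmbedding_mulSingle_section hPT hlab.injOn hψs i hk]
      exact Or.inr (Set.mem_biUnion hk ⟨b, rfl⟩)
  · rw [Subgroup.closure_le]
    rintro x hx
    obtain ⟨i, hi, ⟨y, hy, rfl⟩ | hx⟩ := Set.mem_iUnion₂.mp hx
    · exact ⟨_, edgeEmbedding_mulSingle_of_eq_one ⟨i, hi⟩ (hψY i y hy)⟩
    · obtain ⟨k, hk, b, rfl⟩ := Set.mem_iUnion₂.mp hx
      exact ⟨_, edgeEmbedding_mulSingle_section hPT hlab.injOn hψs ⟨i, hi⟩ hk b⟩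

noncomputable def edgeSubgroupEquivPi
    (hgen : ∀ i, Subgroup.closure (Y i ∪ ⋃ j, Set.range (s j i)) = ⊤) :
    Subgroup.closure (⋃ i ∈ P, (Ybar Y i ∪ ⋃ k ∈ T, Zbar s (lab k) i k)) ≃* ∀ i : P, G i :=
  (MulEquiv.subgroupCongr (range_edgeEmbedding hPT hlab hψY hψs hgen).symm).trans
    (MonoidHom.ofInjective edgeEmbedding_injective).symm

end EdgeSubgroup

lemma disjoint_alphaF_tau {n p : ℕ} (hp : p < 6) :
    Disjoint (alphaF n p) ((tau p).biUnion (alphaF n)) := by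
  rw [Finset.disjoint_left]
  rintro ⟨x, hx⟩ hxP hxT
  interval_cases p <;> simp [tau, alphaF, cc] at hxP hxT <;> omega

lemma bijOn_idxN_tau {n p : ℕ} (hn : 0 < n) (hp : p < 6) :
    Set.BijOn (fun k : Fin (2 * n) => idxN hn k.val) ((tau p).biUnion (alphaF n)) Set.univ := by
  refine ⟨Set.mapsTo_univ _ _, ?_, ?_⟩
  · rintro ⟨x, hx⟩ hxT ⟨y, hy⟩ hyT hxy
    simp only [idxN, Fin.mk.injEq, Nat.mod_eq_ite_of_lt_two_mul hx,
      Nat.mod_eq_ite_of_lt_two_mul hy] at hxy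
    simp only [Finset.mem_coe] at hxT hyT
    rw [Fin.mk.injEq]
    interval_cases p <;> simp [tau, alphaF, cc] at hxT hyT <;> split_ifs at hxy <;> omega
  · rintro ⟨r, hr⟩ -
    by_cases h : (⟨r, by omega⟩ : Fin (2 * n)) ∈ (tau p).biUnion (alphaF n)
    · exact ⟨_, h, Fin.ext (Nat.mod_eq_of_lt hr)⟩
    · refine ⟨⟨r + n, by omega⟩, ?_, Fin.ext (by simp [idxN, Nat.mod_eq_of_lt hr])⟩
      revert h
      interval_cases p <;> simp [tau, alphaF, cc] <;> omega

theorem stmt_11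
    (n : ℕ) (hn : 3 ≤ n)
    (A : Fin n → Type) [∀ j, CommGroup (A j)]
    [∀ j, Module.Finite ℤ (Additive (A j))]
    (G : Fin (2 * n) → Type) [∀ i, Group (G i)]
    (φ : ∀ i, G i →* (∀ j, A j)) (hφ : ∀ i, Function.Surjective (φ i))
    (s : ∀ (j : Fin n) (i : Fin (2 * n)), A j →* G i)
    (Y : ∀ i, Set (G i))
    (hYker : ∀ i, ∀ y ∈ Y i, φ i y = 1)
    (hYgen : ∀ i, Subgroup.closure (Y i ∪ ⋃ j, Set.range (s j i)) = ⊤)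
    (p : ℕ) (hp : p < 6) :
    Nonempty
      (↥(Subgroup.closure (⋃ i ∈ alphaF n p,
            (Ybar Y i ∪ ⋃ j ∈ (tau p).biUnion (fun q => alphaF n q),
              Zbar s (idxN (by omega : 0 < n) j.val) i j)))
        ≃* (∀ i : ↥(alphaF n p), G i.1)) := by
  choose ψ hψY hψs using fun i =>
    exists_eq_one_and_apply_eq_mulSingle (s := fun j => s j i) (hφ i) (hYker i) (hYgen i)
  exact ⟨edgeSubgroupEquivPi (disjoint_alphaF_tau hp) (bijOn_idxN_tau (by omega) hp)
    hψY hψs hYgen⟩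

end SB
end
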